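/- For ν ≥ 0, the series ∑_{n≥1} (2ν+3)_{n-1}/(n!(ν+n+1)) diverges; consequently the invariant measure π_n = (Π_n e₂)* of the ℓ=1 quasi-birth-and-death process has infinite total mass. -/

import Mathlib

open Real

/-- Pochhammer (rising factorial) symbol `(a)_n = a(a+1)⋯(a+n-1)`. -/
noncomputable def poch (a : ℝ) (n : ℕ) : ℝ := ∏ i ∈ Finset.range n, (a + i)

/-- The matrix-valued potential coefficients `Π_n` of the ℓ=1 QBD process
(diagonal, given by their two diagonal entries `i = 0, 1`). -/
noncomputable def Pot (ν : ℝ) (n : ℕ) (i : Fin 2) : ℝ :=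
  if n = 0 then
    Real.Gamma (ν + 1) / (Real.sqrt π * (ν + 2) * Real.Gamma (ν + 1 / 2)) *
      (if i = 0 then 1 else (ν + 1) / (ν + 2))
  else
    2 * Real.Gamma (ν + 2) * poch (2 * ν + 3) (n - 1) /
        (Real.sqrt π * (Nat.factorial n) * (ν + 2) * Real.Gamma (ν + 1 / 2)) *
      (if i = 0 then (ν + 1) / (ν + n + 1) else ν * (ν + n + 1) / ((ν + n) * (ν + n + 2)))

/-! The series diverges for the crude reason that its terms do not tend to zero: since
`(2ν+3)_n ≥ (3)_n = (n+2)!/2`, the `n`-th term is at least `1 / (2(ν+1))`. The coefficients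
`Π_n` are nonnegative and `(Π_{n+1})₀₀` is a fixed positive multiple of the `n`-th term, so the
total mass of the invariant measure dominates a divergent series. -/

lemma not_summable_of_forall_le {f : ℕ → ℝ} {c : ℝ} (hc : 0 < c) (h : ∀ n, c ≤ f n) :
    ¬ Summable f := fun hf =>
  have ⟨n, hn⟩ := (hf.tendsto_atTop_zero.eventually (gt_mem_nhds hc)).exists
  (h n).not_gt hn

lemma poch_pos {a : ℝ} (ha : 0 < a) (n : ℕ) : 0 < poch a n :=
  Finset.prod_pos fun _ _ => by positivity

lemma poch_mono {a b : ℝ} (ha : 0 < a) (hab : a ≤ b) (n : ℕ) : poch a n ≤ poch b n :=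
  Finset.prod_le_prod (fun _ _ => by positivity) fun _ _ => by linarith

lemma poch_three (n : ℕ) : poch 3 n = (n + 2).factorial / 2 := by
  induction n with
  | zero => simp [poch]
  | succ n ih =>
    rw [poch, Finset.prod_range_succ, ← poch, ih, Nat.factorial_succ (n + 2)]
    push_cast
    ring

/-- The paper's `(2ν+3)_{n-1}/(n!(ν+n+1))`, with the index shifted by one. -/
noncomputable def massTerm (ν : ℝ) (n : ℕ) : ℝ :=
  poch (2 * ν + 3) n / ((Nat.factorial (n + 1)) * (ν + n + 2))

lemma inv_two_mul_le_massTerm {ν : ℝ} (hν : 0 ≤ ν) (n : ℕ) :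
    1 / (2 * (ν + 1)) ≤ massTerm ν n := by
  have hpoch : ((n + 2).factorial : ℝ) / 2 ≤ poch (2 * ν + 3) n :=
    poch_three n ▸ poch_mono (by norm_num) (by linarith) n
  have hfac : ((n + 2).factorial : ℝ) = (n + 2) * (n + 1).factorial := by
    rw [Nat.factorial_succ (n + 1)]
    push_cast
    ring
  have hden : (ν + n + 2) ≤ (ν + 1) * (n + 2) := by nlinarith [(n.cast_nonneg : (0 : ℝ) ≤ n)]
  have : 0 < ((n + 1).factorial : ℝ) := by positivity
  rw [massTerm, div_le_div_iff₀ (by positivity) (by positivity)]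
  nlinarith

lemma not_summable_massTerm {ν : ℝ} (hν : 0 ≤ ν) : ¬ Summable (massTerm ν) :=
  not_summable_of_forall_le (by positivity) (inv_two_mul_le_massTerm hν)

lemma Pot_nonneg {ν : ℝ} (hν : 0 ≤ ν) (n : ℕ) (i : Fin 2) : 0 ≤ Pot ν n i := by
  have := poch_pos (a := 2 * ν + 3) (by linarith) (n - 1)
  have := Real.Gamma_pos_of_pos (by linarith : (0 : ℝ) < ν + 1)
  have := Real.Gamma_pos_of_pos (by linarith : (0 : ℝ) < ν + 2)
  have := Real.Gamma_pos_of_pos (by linarith : (0 : ℝ) < ν + 1 / 2)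
  unfold Pot
  split_ifs <;> positivity

lemma Pot_succ_zero (ν : ℝ) (n : ℕ) :
    Pot ν (n + 1) 0 =
      2 * Real.Gamma (ν + 2) * (ν + 1) / (Real.sqrt π * (ν + 2) * Real.Gamma (ν + 1 / 2)) *
        massTerm ν n := by
  simp only [Pot, massTerm, if_true, n.succ_ne_zero, if_false, Nat.add_sub_cancel]
  push_cast
  rw [div_mul_div_comm, div_mul_div_comm]
  ring_nf

/-- for `ν ≥ 0` the series `∑_{n≥1} (2ν+3)_{n-1}/(n!(ν+n+1))` diverges
(here written with index shifted by one), and consequently the invariant measure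
`π_n = (Π_n e₂)*` of the ℓ=1 quasi-birth-and-death process has infinite total mass. -/
theorem qbd_invariant_measure_infinite (ν : ℝ) (hν : 0 ≤ ν) :
    ¬ Summable (fun n : ℕ =>
        poch (2 * ν + 3) n / ((Nat.factorial (n + 1)) * (ν + n + 2))) ∧
    ¬ Summable (fun n : ℕ => Pot ν n 0 + Pot ν n 1) := by
  refine ⟨not_summable_massTerm hν, fun hPot => not_summable_massTerm hν ?_⟩
  have hPot₀ : Summable fun n => Pot ν (n + 1) 0 :=
    (summable_nat_add_iff (f := fun n => Pot ν n 0) 1).mpr <|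
      hPot.of_nonneg_of_le (Pot_nonneg hν · 0) fun n => le_add_of_nonneg_right (Pot_nonneg hν n 1)
  simp only [Pot_succ_zero] at hPot₀
  have := Real.Gamma_pos_of_pos (by linarith : (0 : ℝ) < ν + 2)
  have := Real.Gamma_pos_of_pos (by linarith : (0 : ℝ) < ν + 1 / 2)
  have := Real.sqrt_pos.mpr Real.pi_pos
  exact (summable_mul_left_iff (by positivity)).mp hPot₀
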